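/- Zvol is additive under almost disjoint union: if X ∈ Z_n(A), Y ∈ Z_n(B) are integral n-cycles with |A ∩ B| ≤ n + 1, then Zvol(X + Y) = Zvol(X) + Zvol(Y). -/

import Mathlib

/-- Oriented `n`-simplices on vertex set `ℕ`, represented by their vertex sets
(of size `n+1`), with the orientation given by increasing order. -/
abbrev Simp (n : ℕ) : Type := {s : Finset ℕ // s.card = n + 1}

/-- Simplicial `n`-chains with coefficients in `R`. -/
abbrev GChain (R : Type) [CommRing R] (n : ℕ) : Type := Simp n →₀ R

/-- Integral simplicial `n`-chains. -/
abbrev ZChain (n : ℕ) : Type := GChain ℤ n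

/-- Boundary of a single oriented `(n+1)`-simplex. -/
noncomputable def simpBdry (R : Type) [CommRing R] {n : ℕ} (s : Simp (n + 1)) :
    GChain R n :=
  ∑ v ∈ (s : Finset ℕ).attach,
    ((-1 : R) ^ (((s : Finset ℕ).filter (· < (v : ℕ))).card)) •
      Finsupp.single
        ⟨(s : Finset ℕ).erase (v : ℕ), by
          have hv := v.2
          simp [Finset.card_erase_of_mem hv, s.2]⟩ 1

/-- The simplicial boundary operator. -/
noncomputable def bdry {R : Type} [CommRing R] {n : ℕ} (M : GChain R (n + 1)) :
    GChain R n :=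
  M.sum fun s c => c • simpBdry R s

/-- The `L¹`-norm of an integral chain. -/
noncomputable def znorm {n : ℕ} (M : ZChain n) : ℕ :=
  M.sum fun _ c => c.natAbs

/-- The set of vertices of simplices with nonzero coefficient. -/
noncomputable def vert {R : Type} [CommRing R] {n : ℕ} (M : GChain R n) : Finset ℕ :=
  M.support.sup fun s => (s : Finset ℕ)

/-- The chain is supported on simplices with vertices in `A`. -/
def suppOn {R : Type} [CommRing R] {n : ℕ} (A : Finset ℕ) (M : GChain R n) : Prop :=
  ∀ s ∈ M.support, (s : Finset ℕ) ⊆ A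

/-- Total multiplicity in `M` of simplices containing the vertex `x`. -/
noncomputable def zdeg {n : ℕ} (x : ℕ) (M : ZChain n) : ℕ :=
  M.sum fun s c => if x ∈ (s : Finset ℕ) then c.natAbs else 0

/-- Maximum vertex degree of an integral chain. -/
noncomputable def zmaxdeg {n : ℕ} (M : ZChain n) : ℕ :=
  (vert M).sup fun x => zdeg x M

/-- The cone from the vertex `x` over the chain `U`: each oriented simplex of `U`
gets `x` adjoined as a new first vertex; simplices already containing `x`
contribute `0`. -/
noncomputable def cone {n : ℕ} (x : ℕ) (U : ZChain n) : ZChain (n + 1) :=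
  U.sum fun s c =>
    if h : x ∈ (s : Finset ℕ) then 0
    else
      (((-1 : ℤ) ^ (((s : Finset ℕ).filter (· < x)).card)) * c) •
        Finsupp.single ⟨insert x (s : Finset ℕ), by
          simp [Finset.card_insert_of_notMem h, s.2]⟩ 1

/-- `Zvol X`: the minimal `L¹`-norm of an integral filling of `X`. -/
noncomputable def zvol {n : ℕ} (X : ZChain n) : ℕ :=
  sInf {m : ℕ | ∃ M : ZChain (n + 1), bdry M = X ∧ znorm M = m}

/-- A chain is taut if it is an optimal filling of its boundary. -/
def Taut {n : ℕ} (M : ZChain (n + 1)) : Prop :=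
  znorm M = zvol (bdry M)

/-!
Let `M` be an optimal filling of `X + Y`. Push `M` forward along the retraction `f` fixing `A`
and collapsing every other vertex to a point `p`, and along the retraction `g` fixing `B` and
collapsing the rest to `q`, where `p, q` are two distinct points of `A ∩ B` when there are such.
The cycles `f_* Y` and `g_* X` live on at most `n + 2` vertices, hence vanish, so `f_* M` fills `X`
and `g_* M` fills `Y`. Both `f` and `g` are injective only on simplices with at most
`2 + |A ∩ B \ {p, q}| ≤ n + 2` vertices, so every simplex of `M` dies under one of the pushes and
`|f_* M| + |g_* M| ≤ |M|`. The reverse inequality comes from adding optimal fillings of `X` and `Y`,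
which exist because every cycle bounds a cone.
-/

noncomputable section

section Finset

variable {α β : Type*} {f : α → β} {s : Finset α}

lemma Finset.image_erase_of_injOn [DecidableEq α] [DecidableEq β] (hf : Set.InjOn f s) {v : α}
    (hv : v ∈ s) : (s.erase v).image f = (s.image f).erase (f v) := by
  ext w
  simp only [Finset.mem_image, Finset.mem_erase]
  constructor
  · rintro ⟨u, ⟨huv, hus⟩, rfl⟩
    exact ⟨fun he => huv (hf hus hv he), u, hus, rfl⟩
  · rintro ⟨hw, u, hus, rfl⟩
    exact ⟨u, ⟨fun he => hw (by rw [he]), hus⟩, rfl⟩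

lemma Finset.image_erase_of_apply_eq [DecidableEq α] [DecidableEq β] {a b : α}
    (hb : b ∈ s.erase a) (hf : f b = f a) : (s.erase a).image f = s.image f := by
  refine (Finset.image_subset_image (Finset.erase_subset a s)).antisymm fun y hy => ?_
  obtain ⟨x, hx, rfl⟩ := Finset.mem_image.1 hy
  by_cases hxa : x = a
  · exact Finset.mem_image.2 ⟨b, hb, hxa ▸ hf⟩
  · exact Finset.mem_image_of_mem f (Finset.mem_erase.2 ⟨hxa, hx⟩)

lemma Set.InjOn.finset_erase_of_apply_eq [DecidableEq α] {u w : α}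
    (hinj : Set.InjOn f (s.erase w)) (hu : u ∈ s) (hw : w ∈ s) (huw : u ≠ w) (hf : f u = f w) :
    Set.InjOn f (s.erase u) := by
  have hset : (↑(s.erase u) : Set α) = insert w ↑((s.erase w).erase u) := by
    rw [Finset.erase_right_comm, ← Finset.coe_insert,
      Finset.insert_erase (Finset.mem_erase.2 ⟨huw.symm, hw⟩)]
  rw [hset, Set.injOn_insert (by simp)]
  refine ⟨hinj.mono (by simp), ?_⟩
  rintro ⟨x, hx, hfx⟩
  have hx' := Finset.mem_erase.1 (Finset.mem_coe.1 hx)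
  exact hx'.1 (hinj (Finset.mem_coe.2 hx'.2) (Finset.mem_erase.2 ⟨huw, hu⟩) (hfx.trans hf.symm))

lemma Set.InjOn.card_filter_apply_eq_le_one [DecidableEq β] (hf : Set.InjOn f s) (p : β) :
    (s.filter (f · = p)).card ≤ 1 :=
  Finset.card_le_one.2 fun _ hx _ hy =>
    hf (Finset.mem_filter.1 hx).1 (Finset.mem_filter.1 hy).1
      ((Finset.mem_filter.1 hx).2.trans (Finset.mem_filter.1 hy).2.symm)

lemma neg_one_pow_card_filter (s : Finset α) (p : α → Prop) [DecidablePred p] :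
    (-1 : ℤ) ^ (s.filter p).card = ∏ x ∈ s, if p x then -1 else 1 := by
  rw [Finset.prod_ite, Finset.prod_const, Finset.prod_const, one_pow, mul_one]

end Finset

/-- The simplex with vertex set `t`, or `0` when `t` does not have `n + 1` elements. -/
def simplexChain (n : ℕ) (t : Finset ℕ) : ZChain n :=
  if h : t.card = n + 1 then Finsupp.single ⟨t, h⟩ 1 else 0

lemma simplexChain_of_card_eq {n : ℕ} {t : Finset ℕ} (h : t.card = n + 1) :
    simplexChain n t = Finsupp.single ⟨t, h⟩ 1 :=
  dif_pos h

lemma Simp.card_erase {n : ℕ} (s : Simp n) {v : ℕ} (hv : v ∈ (s : Finset ℕ)) :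
    ((s : Finset ℕ).erase v).card = n := by
  rw [Finset.card_erase_of_mem hv, s.2, Nat.add_sub_cancel]

def faceSum {m : ℕ} (F : Finset ℕ → ZChain m) (S : Finset ℕ) : ZChain m :=
  ∑ v ∈ S, (-1 : ℤ) ^ (S.filter (· < v)).card • F (S.erase v)

lemma faceSum_congr {m : ℕ} {F G : Finset ℕ → ZChain m} {S : Finset ℕ}
    (h : ∀ v ∈ S, F (S.erase v) = G (S.erase v)) : faceSum F S = faceSum G S :=
  Finset.sum_congr rfl fun v hv => by rw [h v hv]

lemma map_faceSum {m k : ℕ} (L : ZChain m →ₗ[ℤ] ZChain k) (F : Finset ℕ → ZChain m)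
    (S : Finset ℕ) : L (faceSum F S) = faceSum (fun t => L (F t)) S := by
  simp only [faceSum, map_sum, map_zsmul]

lemma bdry_eq_linearCombination {n : ℕ} (M : ZChain (n + 1)) :
    bdry M = Finsupp.linearCombination ℤ (simpBdry ℤ) M :=
  (Finsupp.linearCombination_apply ℤ M).symm

lemma bdry_zero {n : ℕ} : bdry (0 : ZChain (n + 1)) = 0 := by
  rw [bdry_eq_linearCombination, map_zero]

lemma bdry_add {n : ℕ} (M N : ZChain (n + 1)) : bdry (M + N) = bdry M + bdry N := by
  simp only [bdry_eq_linearCombination, map_add]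

lemma bdry_smul {n : ℕ} (c : ℤ) (M : ZChain (n + 1)) : bdry (c • M) = c • bdry M := by
  simp only [bdry_eq_linearCombination, map_smul]

lemma bdry_single {n : ℕ} (s : Simp (n + 1)) (c : ℤ) :
    bdry (Finsupp.single s c) = c • simpBdry ℤ s := by
  rw [bdry_eq_linearCombination, Finsupp.linearCombination_single]

lemma bdry_simplexChain {n : ℕ} {t : Finset ℕ} (h : t.card = n + 2) :
    bdry (simplexChain (n + 1) t) = simpBdry ℤ ⟨t, h⟩ := by
  rw [simplexChain_of_card_eq h, bdry_single, one_smul]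

lemma simpBdry_eq_faceSum {n : ℕ} (s : Simp (n + 1)) :
    simpBdry ℤ s = faceSum (simplexChain n) s := by
  rw [simpBdry, faceSum, ← Finset.sum_attach (s : Finset ℕ)]
  refine Finset.sum_congr rfl fun v _ => ?_
  rw [simplexChain_of_card_eq (s.card_erase v.2)]

section OrientationSign

def pairSign (f : ℕ → ℕ) (x y : ℕ) : ℤ := if (x < y ↔ f x < f y) then 1 else -1

/-- For `f` injective on `s`, the sign of the permutation by which `f` reorders `s`. -/
def orientSign (f : ℕ → ℕ) (s : Finset ℕ) : ℤ :=
  ∏ x ∈ s, ∏ y ∈ s, if x < y then pairSign f x y else 1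

def unorderedPairSign (f : ℕ → ℕ) (u v : ℕ) : ℤ :=
  if u < v then pairSign f u v else if v < u then pairSign f v u else 1

lemma orientSign_insert (f : ℕ → ℕ) {v : ℕ} {t : Finset ℕ} (hv : v ∉ t) :
    orientSign f (insert v t) = orientSign f t * ∏ u ∈ t, unorderedPairSign f u v := by
  have hpairs : ∏ u ∈ t, unorderedPairSign f u v =
      (∏ y ∈ t, if v < y then pairSign f v y else 1) *
        ∏ x ∈ t, if x < v then pairSign f x v else 1 := by
    rw [← Finset.prod_mul_distrib]
    refine Finset.prod_congr rfl fun u hu => ?_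
    rcases lt_trichotomy u v with h | rfl | h
    · simp [unorderedPairSign, h, h.not_gt]
    · exact absurd hu hv
    · simp [unorderedPairSign, h, h.not_gt]
  simp only [orientSign, Finset.prod_insert hv, lt_irrefl, if_false, one_mul,
    Finset.prod_mul_distrib, hpairs]
  ring

lemma orientSign_eq_one_of_forall_eq (f : ℕ → ℕ) {s : Finset ℕ} (h : ∀ x ∈ s, f x = x) :
    orientSign f s = 1 :=
  Finset.prod_eq_one fun x hx => Finset.prod_eq_one fun y hy => by
    split_ifs <;> simp [pairSign, h x hx, h y hy]

lemma natAbs_orientSign (f : ℕ → ℕ) (s : Finset ℕ) : (orientSign f s).natAbs = 1 := by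
  refine (map_prod Int.natAbsHom _ s).trans (Finset.prod_eq_one fun x _ => ?_)
  refine (map_prod Int.natAbsHom _ s).trans (Finset.prod_eq_one fun y _ => ?_)
  unfold pairSign
  split_ifs <;> rfl

lemma orientSign_insert_mul (f : ℕ → ℕ) {t : Finset ℕ} {v : ℕ} (hvt : v ∉ t)
    (hinj : ∀ u ∈ t, f u ≠ f v) :
    orientSign f (insert v t) * ∏ u ∈ t, (if f u < f v then -1 else 1) =
      (∏ u ∈ t, if u < v then -1 else 1) * orientSign f t := by
  have hpair : ∀ u ∈ t,
      unorderedPairSign f u v * (if f u < f v then -1 else 1) = if u < v then -1 else 1 := by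
    intro u hu
    have huv : u ≠ v := fun h => hvt (h ▸ hu)
    have := hinj u hu
    unfold unorderedPairSign pairSign
    split_ifs <;> first | rfl | omega
  rw [orientSign_insert f hvt, mul_assoc, ← Finset.prod_mul_distrib, Finset.prod_congr rfl hpair,
    mul_comm]

end OrientationSign

section Push

def pushSimplex (f : ℕ → ℕ) (n : ℕ) (t : Finset ℕ) : ZChain n :=
  if Set.InjOn f t then orientSign f t • simplexChain n (t.image f) else 0

def push (f : ℕ → ℕ) {n : ℕ} : ZChain n →ₗ[ℤ] ZChain n :=
  Finsupp.linearCombination ℤ fun s => pushSimplex f n s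

variable (f : ℕ → ℕ) {n : ℕ}

lemma push_single (s : Simp n) (c : ℤ) :
    push f (Finsupp.single s c) = c • pushSimplex f n s :=
  Finsupp.linearCombination_single ℤ c s

lemma push_eq_sum (M : ZChain n) : push f M = ∑ s ∈ M.support, M s • pushSimplex f n s :=
  Finsupp.linearCombination_apply ℤ M

lemma push_simplexChain {t : Finset ℕ} (h : t.card = n + 1) :
    push f (simplexChain n t) = pushSimplex f n t := by
  rw [simplexChain_of_card_eq h, push_single, one_smul]

lemma pushSimplex_of_injOn {t : Finset ℕ} (hinj : Set.InjOn f t) (h : t.card = n + 1) :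
    pushSimplex f n t =
      Finsupp.single ⟨t.image f, (Finset.card_image_of_injOn hinj).trans h⟩ (orientSign f t) := by
  rw [pushSimplex, if_pos hinj, simplexChain_of_card_eq, Finsupp.smul_single, smul_eq_mul, mul_one]

lemma pushSimplex_of_not_injOn {t : Finset ℕ} (hinj : ¬Set.InjOn f t) : pushSimplex f n t = 0 :=
  if_neg hinj

lemma push_simpBdry (s : Simp (n + 1)) : push f (simpBdry ℤ s) = faceSum (pushSimplex f n) s := by
  rw [simpBdry_eq_faceSum, map_faceSum]
  exact faceSum_congr fun v hv => push_simplexChain f (s.card_erase hv)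

lemma bdry_pushSimplex_of_injOn {S : Finset ℕ} (hS : S.card = n + 2) (hinj : Set.InjOn f S) :
    bdry (pushSimplex f (n + 1) S) = faceSum (pushSimplex f n) S := by
  rw [pushSimplex, if_pos hinj, bdry_smul,
    bdry_simplexChain ((Finset.card_image_of_injOn hinj).trans hS), simpBdry_eq_faceSum,
    faceSum, faceSum, Finset.smul_sum, Finset.sum_image fun x hx y hy hxy => hinj hx hy hxy]
  refine Finset.sum_congr rfl fun v hv => ?_
  have hinj' : Set.InjOn f (S.erase v) := hinj.mono (by simp)
  have hne : ∀ u ∈ S.erase v, f u ≠ f v := fun u hu he =>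
    (Finset.mem_erase.1 hu).1 (hinj (Finset.mem_of_mem_erase hu) hv he)
  have himage : (-1 : ℤ) ^ ((S.image f).filter (· < f v)).card =
      ∏ u ∈ S.erase v, if f u < f v then -1 else 1 := by
    rw [neg_one_pow_card_filter, Finset.prod_image fun x hx y hy hxy => hinj hx hy hxy,
      ← Finset.mul_prod_erase S _ hv, if_neg (lt_irrefl (f v)), one_mul]
  have hsource : (-1 : ℤ) ^ (S.filter (· < v)).card = ∏ u ∈ S.erase v, if u < v then -1 else 1 := by
    rw [neg_one_pow_card_filter, ← Finset.mul_prod_erase S _ hv, if_neg (lt_irrefl v), one_mul]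
  have hsign := orientSign_insert_mul f (Finset.notMem_erase v S) hne
  rw [Finset.insert_erase hv] at hsign
  rw [pushSimplex, if_pos hinj', Finset.image_erase_of_injOn hinj hv, smul_smul, smul_smul,
    himage, hsource, hsign]

/-- The faces opposite `a` and `b` have the same image under `f`, with opposite induced
orientations. -/
lemma pushSimplex_erase_cancel {S : Finset ℕ} {a b : ℕ} (hab : a < b) (ha : a ∈ S) (hb : b ∈ S)
    (hfab : f a = f b) (hainj : Set.InjOn f (S.erase a)) (hbinj : Set.InjOn f (S.erase b)) :
    (-1 : ℤ) ^ (S.filter (· < a)).card • pushSimplex f n (S.erase a) +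
      (-1 : ℤ) ^ (S.filter (· < b)).card • pushSimplex f n (S.erase b) = 0 := by
  have hbea : b ∈ S.erase a := Finset.mem_erase.2 ⟨hab.ne', hb⟩
  have haeb : a ∈ S.erase b := Finset.mem_erase.2 ⟨hab.ne, ha⟩
  set t := (S.erase a).erase b with ht
  have hbt : b ∉ t := Finset.notMem_erase b _
  have hat : a ∉ t := fun h => Finset.notMem_erase a S (Finset.mem_of_mem_erase h)
  have hSa : S.erase a = insert b t := (Finset.insert_erase hbea).symm
  have hSb : S.erase b = insert a t := by
    rw [ht, Finset.erase_right_comm, Finset.insert_erase haeb]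
  have himage : (S.erase a).image f = (S.erase b).image f :=
    (Finset.image_erase_of_apply_eq hbea hfab.symm).trans
      (Finset.image_erase_of_apply_eq haeb hfab).symm
  rw [pushSimplex, if_pos hainj, pushSimplex, if_pos hbinj, himage, smul_smul, smul_smul,
    ← add_smul]
  convert zero_smul ℤ _
  have hsign_a : (-1 : ℤ) ^ (S.filter (· < a)).card = ∏ y ∈ t, if y < a then -1 else 1 := by
    rw [neg_one_pow_card_filter, ← Finset.mul_prod_erase S _ ha, if_neg (lt_irrefl a), one_mul,
      ← Finset.mul_prod_erase (S.erase a) _ hbea, if_neg hab.not_gt, one_mul]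
  have hsign_b : (-1 : ℤ) ^ (S.filter (· < b)).card = -∏ y ∈ t, if y < b then -1 else 1 := by
    rw [neg_one_pow_card_filter, ← Finset.mul_prod_erase S _ hb, if_neg (lt_irrefl b), one_mul,
      ← Finset.mul_prod_erase (S.erase b) _ haeb, if_pos hab, ht, Finset.erase_right_comm]
    ring
  have hpair : ∀ y ∈ t, (if y < a then (-1 : ℤ) else 1) * unorderedPairSign f y b =
      (if y < b then -1 else 1) * unorderedPairSign f y a := by
    intro y hy
    have hya : y ≠ a := fun h => hat (h ▸ hy)
    have hyb : y ≠ b := fun h => hbt (h ▸ hy)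
    have hfya : f y ≠ f a := fun h =>
      hya (hbinj (Finset.mem_erase.2 ⟨hyb, Finset.mem_of_mem_erase (Finset.mem_of_mem_erase hy)⟩)
        haeb h)
    have hfyb : f y ≠ f b := hfab ▸ hfya
    unfold unorderedPairSign pairSign
    split_ifs <;> first | rfl | omega
  have hprod := Finset.prod_congr rfl hpair
  rw [Finset.prod_mul_distrib, Finset.prod_mul_distrib] at hprod
  rw [hsign_a, hsign_b, hSa, hSb, orientSign_insert f hbt, orientSign_insert f hat]
  linear_combination orientSign f t * hprod

lemma faceSum_pushSimplex_of_not_injOn {S : Finset ℕ} (hinj : ¬Set.InjOn f S) :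
    faceSum (pushSimplex f n) S = 0 := by
  rw [faceSum]
  by_cases hex : ∃ w ∈ S, Set.InjOn f (S.erase w)
  swap
  · exact Finset.sum_eq_zero fun v hv => by
      rw [pushSimplex_of_not_injOn f fun h => hex ⟨v, hv, h⟩, smul_zero]
  obtain ⟨w, hw, hwinj⟩ := hex
  have hcollision : ∃ u ∈ S, u ≠ w ∧ f u = f w := by
    simp only [Set.InjOn, not_forall] at hinj
    obtain ⟨x, hx, y, hy, hfxy, hxy⟩ := hinj
    by_cases hxw : x = w
    · exact ⟨y, hy, fun h => hxy (hxw.trans h.symm), hxw ▸ hfxy.symm⟩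
    by_cases hyw : y = w
    · exact ⟨x, hx, hxw, hyw ▸ hfxy⟩
    exact absurd (hwinj (Finset.mem_erase.2 ⟨hxw, hx⟩) (Finset.mem_erase.2 ⟨hyw, hy⟩) hfxy) hxy
  obtain ⟨u, hu, huw, hfuw⟩ := hcollision
  have huinj := hwinj.finset_erase_of_apply_eq hu hw huw hfuw
  have hsub : ({u, w} : Finset ℕ) ⊆ S := Finset.insert_subset hu (Finset.singleton_subset_iff.2 hw)
  have hzero : ∀ v ∈ S, v ∉ ({u, w} : Finset ℕ) →
      (-1 : ℤ) ^ (S.filter (· < v)).card • pushSimplex f n (S.erase v) = 0 := by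
    intro v hv hvuw
    simp only [Finset.mem_insert, Finset.mem_singleton, not_or] at hvuw
    rw [pushSimplex_of_not_injOn, smul_zero]
    exact fun hvinj => huw (hvinj (Finset.mem_erase.2 ⟨Ne.symm hvuw.1, hu⟩)
      (Finset.mem_erase.2 ⟨Ne.symm hvuw.2, hw⟩) hfuw)
  rw [← Finset.sum_subset hsub hzero, Finset.sum_pair huw]
  rcases huw.lt_or_gt with h | h
  · exact pushSimplex_erase_cancel f h hu hw hfuw huinj hwinj
  · rw [add_comm]
    exact pushSimplex_erase_cancel f h hw hu hfuw.symm hwinj huinj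

lemma bdry_pushSimplex {S : Finset ℕ} (hS : S.card = n + 2) :
    bdry (pushSimplex f (n + 1) S) = faceSum (pushSimplex f n) S := by
  by_cases hinj : Set.InjOn f S
  · exact bdry_pushSimplex_of_injOn f hS hinj
  · rw [pushSimplex_of_not_injOn f hinj, bdry_zero, faceSum_pushSimplex_of_not_injOn f hinj]

theorem bdry_push (M : ZChain (n + 1)) : bdry (push f M) = push f (bdry M) := by
  induction M using Finsupp.induction with
  | zero => simp only [map_zero, bdry_zero]
  | single_add s c M _ _ ih =>
    rw [map_add, bdry_add, bdry_add, map_add, ih, push_single, bdry_smul, bdry_single, map_zsmul,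
      push_simpBdry, bdry_pushSimplex f s.2]

lemma push_eq_self_of_suppOn {A : Finset ℕ} {X : ZChain n} (hX : suppOn A X)
    (hf : ∀ x ∈ A, f x = x) : push f X = X := by
  rw [push_eq_sum]
  conv_rhs => rw [← Finsupp.sum_single X]
  refine Finset.sum_congr rfl fun s hs => ?_
  have hid : ∀ x ∈ (s : Finset ℕ), f x = x := fun x hx => hf x (hX s hs hx)
  have hinj : Set.InjOn f (s : Finset ℕ) := fun x hx y hy hxy => by
    rwa [hid x hx, hid y hy] at hxy
  rw [pushSimplex_of_injOn f hinj s.2, orientSign_eq_one_of_forall_eq f hid, Finsupp.smul_single,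
    smul_eq_mul, mul_one]
  congr
  rw [Finset.image_congr hid, Finset.image_id']

lemma suppOn_push {A : Finset ℕ} {M : ZChain n} (hM : suppOn A M) :
    suppOn (A.image f) (push f M) := by
  intro t ht
  rw [push_eq_sum] at ht
  obtain ⟨s, hs, hts⟩ := Finset.mem_biUnion.1 (Finsupp.support_finsetSum ht)
  by_cases hinj : Set.InjOn f (s : Finset ℕ)
  · rw [pushSimplex_of_injOn f hinj s.2, Finsupp.smul_single] at hts
    rw [Finset.mem_singleton.1 (Finsupp.support_single_subset hts)]
    exact Finset.image_subset_image (hM s hs)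
  · rw [pushSimplex_of_not_injOn f hinj, smul_zero, Finsupp.support_zero] at hts
    exact absurd hts (Finset.notMem_empty t)

end Push

section Cone

def coneSimplex (x : ℕ) (n : ℕ) (t : Finset ℕ) : ZChain (n + 1) :=
  if x ∈ t then 0 else (-1 : ℤ) ^ (t.filter (· < x)).card • simplexChain (n + 1) (insert x t)

variable (x : ℕ) {n : ℕ}

lemma cone_eq_linearCombination (U : ZChain n) :
    cone x U = Finsupp.linearCombination ℤ (fun s : Simp n => coneSimplex x n s) U := by
  rw [Finsupp.linearCombination_apply]
  refine Finsupp.sum_congr fun s _ => ?_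
  by_cases hx : x ∈ (s : Finset ℕ)
  · rw [dif_pos hx, coneSimplex, if_pos hx, smul_zero]
  · rw [dif_neg hx, coneSimplex, if_neg hx,
      simplexChain_of_card_eq (by rw [Finset.card_insert_of_notMem hx, s.2]), smul_smul, mul_comm]

lemma cone_single (s : Simp n) (c : ℤ) : cone x (Finsupp.single s c) = c • coneSimplex x n s := by
  rw [cone_eq_linearCombination, Finsupp.linearCombination_single]

lemma cone_zero : cone x (0 : ZChain n) = 0 := by
  rw [cone_eq_linearCombination, map_zero]

lemma cone_add (U V : ZChain n) : cone x (U + V) = cone x U + cone x V := by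
  simp only [cone_eq_linearCombination, map_add]

lemma cone_smul (c : ℤ) (U : ZChain n) : cone x (c • U) = c • cone x U := by
  simp only [cone_eq_linearCombination, map_smul]

lemma cone_simpBdry (s : Simp (n + 1)) : cone x (simpBdry ℤ s) = faceSum (coneSimplex x n) s := by
  rw [simpBdry_eq_faceSum, cone_eq_linearCombination, map_faceSum]
  refine faceSum_congr fun v hv => ?_
  rw [simplexChain_of_card_eq (s.card_erase hv), Finsupp.linearCombination_single, one_smul]

lemma neg_one_pow_smul_coneSimplex_erase {S : Finset ℕ} (hx : x ∈ S) :
    (-1 : ℤ) ^ (S.filter (· < x)).card • coneSimplex x n (S.erase x) = simplexChain (n + 1) S := by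
  have hfilter : ((S.erase x).filter (· < x)) = S.filter (· < x) := by
    rw [Finset.filter_erase, Finset.erase_eq_of_notMem (by simp)]
  rw [coneSimplex, if_neg (Finset.notMem_erase x S), Finset.insert_erase hx, hfilter, smul_smul,
    ← pow_add, Even.neg_one_pow ⟨_, rfl⟩, one_smul]

lemma bdry_coneSimplex {S : Finset ℕ} (hS : S.card = n + 2) :
    bdry (coneSimplex x (n + 1) S) = simplexChain (n + 1) S - faceSum (coneSimplex x n) S := by
  rw [faceSum]
  by_cases hx : x ∈ S
  · rw [coneSimplex, if_pos hx, bdry_zero, Finset.sum_eq_single_of_mem x hx,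
      neg_one_pow_smul_coneSimplex_erase x hx, sub_self]
    intro v _ hvx
    rw [coneSimplex, if_pos (Finset.mem_erase.2 ⟨Ne.symm hvx, hx⟩), smul_zero]
  have hins : (insert x S).card = n + 1 + 1 + 1 := by rw [Finset.card_insert_of_notMem hx, hS]
  have hfirst : (-1 : ℤ) ^ (S.filter (· < x)).card •
      ((-1 : ℤ) ^ ((insert x S).filter (· < x)).card • simplexChain (n + 1) ((insert x S).erase x))
      = simplexChain (n + 1) S := by
    rw [Finset.filter_insert, if_neg (lt_irrefl x), Finset.erase_insert hx, smul_smul, ← pow_add,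
      Even.neg_one_pow ⟨_, rfl⟩, one_smul]
  rw [coneSimplex, if_neg hx, bdry_smul, bdry_simplexChain hins, simpBdry_eq_faceSum, faceSum]
  dsimp only
  rw [Finset.sum_insert hx, smul_add, hfirst, sub_eq_add_neg, Finset.smul_sum,
    ← Finset.sum_neg_distrib]
  congr 1
  refine Finset.sum_congr rfl fun v hv => ?_
  have hxv : x ≠ v := fun h => hx (h ▸ hv)
  rw [coneSimplex, if_neg fun h => hx (Finset.mem_of_mem_erase h), Finset.erase_insert_of_ne hxv,
    smul_smul, smul_smul, ← neg_smul]
  congr 1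
  rw [neg_one_pow_card_filter (insert x S), Finset.prod_insert hx, neg_one_pow_card_filter S,
    ← Finset.mul_prod_erase S (fun u => if u < x then (-1 : ℤ) else 1) hv,
    neg_one_pow_card_filter S, neg_one_pow_card_filter (S.erase v)]
  rcases hxv.lt_or_gt with hlt | hlt
  · rw [if_pos hlt, if_neg hlt.asymm]
    ring
  · rw [if_neg hlt.asymm, if_pos hlt]
    ring

theorem bdry_cone (U : ZChain (n + 1)) : bdry (cone x U) = U - cone x (bdry U) := by
  induction U using Finsupp.induction with
  | zero => rw [cone_zero, bdry_zero, bdry_zero, cone_zero, sub_zero]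
  | single_add s c M _ _ ih =>
    rw [cone_add, bdry_add, ih, bdry_add, cone_add, cone_single, bdry_smul, bdry_coneSimplex x s.2,
      bdry_single, cone_smul, cone_simpBdry, simplexChain_of_card_eq s.2, smul_sub,
      Finsupp.smul_single, smul_eq_mul, mul_one]
    abel

lemma exists_bdry_eq_of_bdry_eq_zero {U : ZChain (n + 1)} (hU : bdry U = 0) :
    ∃ M : ZChain (n + 2), bdry M = U :=
  ⟨cone 0 U, by rw [bdry_cone, hU, cone_zero, sub_zero]⟩

end Cone

section Norm

variable {n : ℕ}

lemma znorm_eq_sum_of_support_subset (M : ZChain n) {t : Finset (Simp n)} (h : M.support ⊆ t) :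
    znorm M = ∑ s ∈ t, (M s).natAbs :=
  Finsupp.sum_of_support_subset M h _ fun _ _ => rfl

lemma znorm_zero : znorm (0 : ZChain n) = 0 := Finsupp.sum_zero_index

lemma znorm_single (s : Simp n) (c : ℤ) : znorm (Finsupp.single s c) = c.natAbs :=
  Finsupp.sum_single_index rfl

lemma znorm_add_le (M N : ZChain n) : znorm (M + N) ≤ znorm M + znorm N := by
  rw [znorm_eq_sum_of_support_subset (M + N) Finsupp.support_add,
    znorm_eq_sum_of_support_subset M Finset.subset_union_left,
    znorm_eq_sum_of_support_subset N Finset.subset_union_right, ← Finset.sum_add_distrib]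
  exact Finset.sum_le_sum fun s _ => Int.natAbs_add_le _ _

lemma znorm_sum_le {ι : Type} (t : Finset ι) (F : ι → ZChain n) :
    znorm (∑ i ∈ t, F i) ≤ ∑ i ∈ t, znorm (F i) :=
  Finset.le_sum_of_subadditive znorm znorm_zero.le znorm_add_le t F

variable (f : ℕ → ℕ)

lemma znorm_smul_pushSimplex (s : Simp n) (c : ℤ) :
    znorm (c • pushSimplex f n s) = if Set.InjOn f (s : Finset ℕ) then c.natAbs else 0 := by
  by_cases hinj : Set.InjOn f (s : Finset ℕ)
  · rw [if_pos hinj, pushSimplex_of_injOn f hinj s.2, Finsupp.smul_single, znorm_single,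
      smul_eq_mul, Int.natAbs_mul, natAbs_orientSign, mul_one]
  · rw [if_neg hinj, pushSimplex_of_not_injOn f hinj, smul_zero, znorm_zero]

lemma znorm_push_le (M : ZChain n) :
    znorm (push f M) ≤ ∑ s ∈ M.support, if Set.InjOn f (s : Finset ℕ) then (M s).natAbs else 0 := by
  rw [push_eq_sum]
  refine (znorm_sum_le _ _).trans (Finset.sum_le_sum fun s _ => ?_)
  rw [znorm_smul_pushSimplex]

lemma znorm_push_add_znorm_push_le (g : ℕ → ℕ) (M : ZChain n)
    (hfg : ∀ s ∈ M.support, ¬(Set.InjOn f (s : Finset ℕ) ∧ Set.InjOn g (s : Finset ℕ))) :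
    znorm (push f M) + znorm (push g M) ≤ znorm M := by
  refine (add_le_add (znorm_push_le f M) (znorm_push_le g M)).trans ?_
  rw [znorm_eq_sum_of_support_subset M subset_rfl, ← Finset.sum_add_distrib]
  refine Finset.sum_le_sum fun s hs => ?_
  have := hfg s hs
  split_ifs <;> simp_all

end Norm

section Zvol

variable {n : ℕ}

lemma zvol_le_znorm {X : ZChain n} {M : ZChain (n + 1)} (h : bdry M = X) : zvol X ≤ znorm M :=
  Nat.sInf_le ⟨M, h, rfl⟩

lemma exists_znorm_eq_zvol {X : ZChain (n + 1)} (hX : bdry X = 0) :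
    ∃ M : ZChain (n + 2), bdry M = X ∧ znorm M = zvol X := by
  obtain ⟨M, hM⟩ := exists_bdry_eq_of_bdry_eq_zero hX
  have hfillable : {m | ∃ M : ZChain (n + 2), bdry M = X ∧ znorm M = m}.Nonempty :=
    ⟨znorm M, M, hM, rfl⟩
  exact Nat.sInf_mem hfillable

lemma zvol_add_le {X Y : ZChain (n + 1)} (hX : bdry X = 0) (hY : bdry Y = 0) :
    zvol (X + Y) ≤ zvol X + zvol Y := by
  obtain ⟨MX, hMX, hMXn⟩ := exists_znorm_eq_zvol hX
  obtain ⟨MY, hMY, hMYn⟩ := exists_znorm_eq_zvol hY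
  calc zvol (X + Y) ≤ znorm (MX + MY) := zvol_le_znorm (by rw [bdry_add, hMX, hMY])
    _ ≤ znorm MX + znorm MY := znorm_add_le MX MY
    _ = zvol X + zvol Y := by rw [hMXn, hMYn]

end Zvol

section SmallCycles

variable {n : ℕ}

lemma simpBdry_apply_erase (σ : Simp (n + 1)) {a : ℕ} (ha : a ∈ (σ : Finset ℕ)) :
    simpBdry ℤ σ ⟨(σ : Finset ℕ).erase a, σ.card_erase ha⟩ =
      (-1) ^ ((σ : Finset ℕ).filter (· < a)).card := by
  rw [simpBdry_eq_faceSum, faceSum, Finsupp.finsetSum_apply, Finset.sum_eq_single_of_mem a ha]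
  · rw [Finsupp.smul_apply, simplexChain_of_card_eq (σ.card_erase ha), Finsupp.single_eq_same,
      smul_eq_mul, mul_one]
  intro v hv hva
  rw [Finsupp.smul_apply, simplexChain_of_card_eq (σ.card_erase hv), Finsupp.single_apply,
    if_neg, smul_zero]
  intro h
  have ha' : a ∈ (σ : Finset ℕ).erase v := Finset.mem_erase.2 ⟨Ne.symm hva, ha⟩
  rw [show (σ : Finset ℕ).erase v = (σ : Finset ℕ).erase a from congrArg Subtype.val h] at ha'
  exact Finset.notMem_erase a _ ha'

lemma simpBdry_ne_zero (σ : Simp (n + 1)) : simpBdry ℤ σ ≠ 0 := by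
  obtain ⟨a, ha⟩ : (σ : Finset ℕ).Nonempty := Finset.card_pos.1 (by rw [σ.2]; omega)
  intro h
  have hface := simpBdry_apply_erase σ ha
  rw [h, Finsupp.coe_zero, Pi.zero_apply] at hface
  exact pow_ne_zero _ (by norm_num) hface.symm

theorem eq_zero_of_bdry_eq_zero_of_suppOn {C : Finset ℕ} (hC : C.card ≤ n + 2)
    {W : ZChain (n + 1)} (hW : suppOn C W) (hcycle : bdry W = 0) : W = 0 := by
  by_contra hne
  obtain ⟨σ, hσ⟩ := Finsupp.support_nonempty_iff.2 hne
  have hvertices : ∀ s ∈ W.support, (s : Finset ℕ) = C := fun s hs =>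
    Finset.eq_of_subset_of_card_le (hW s hs) (by rw [s.2]; exact hC)
  have hsingle : W = Finsupp.single σ (W σ) := Finsupp.eq_single_iff.2 ⟨fun s hs =>
    Finset.mem_singleton.2 (Subtype.ext ((hvertices s hs).trans (hvertices σ hσ).symm)), rfl⟩
  rw [hsingle, bdry_single, smul_eq_zero] at hcycle
  exact hcycle.elim (Finsupp.mem_support_iff.1 hσ) (simpBdry_ne_zero σ)

end SmallCycles

section Retraction

def retract (A : Finset ℕ) (p x : ℕ) : ℕ := if x ∈ A then x else p

lemma retract_of_mem {A : Finset ℕ} (p : ℕ) {x : ℕ} (hx : x ∈ A) : retract A p x = x := if_pos hx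

lemma image_retract_subset (A B : Finset ℕ) (p : ℕ) :
    B.image (retract A p) ⊆ insert p (A ∩ B) := by
  intro y hy
  obtain ⟨x, hx, rfl⟩ := Finset.mem_image.1 hy
  unfold retract
  split_ifs with hxA
  · exact Finset.mem_insert_of_mem (Finset.mem_inter.2 ⟨hxA, hx⟩)
  · exact Finset.mem_insert_self p _

lemma push_retract_eq_zero {A B : Finset ℕ} {p n : ℕ} (hcard : (insert p (A ∩ B)).card ≤ n + 2)
    {Y : ZChain (n + 1)} (hY : suppOn B Y) (hcycle : bdry Y = 0) : push (retract A p) Y = 0 :=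
  eq_zero_of_bdry_eq_zero_of_suppOn hcard
    (fun s hs => (suppOn_push _ hY s hs).trans (image_retract_subset A B p))
    (by rw [bdry_push, hcycle, map_zero])

lemma card_le_of_injOn_retract {A B : Finset ℕ} {p q : ℕ} {t : Finset ℕ}
    (hf : Set.InjOn (retract A p) t) (hg : Set.InjOn (retract B q) t) :
    t.card ≤ 2 + ((A ∩ B) \ {p, q}).card := by
  -- outside the fibres over `p` and `q` a vertex is fixed by both retractions
  have hcover : t ⊆ t.filter (retract A p · = p) ∪ t.filter (retract B q · = q) ∪
      (A ∩ B) \ {p, q} := by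
    intro x hx
    by_cases hxA : x ∈ A <;> by_cases hxB : x ∈ B <;> simp [retract, hx, hxA, hxB]
    tauto
  calc t.card ≤ (t.filter (retract A p · = p)).card + (t.filter (retract B q · = q)).card +
        ((A ∩ B) \ {p, q}).card :=
        (Finset.card_le_card hcover).trans ((Finset.card_union_le _ _).trans
          (Nat.add_le_add_right (Finset.card_union_le _ _) _))
    _ ≤ 2 + ((A ∩ B) \ {p, q}).card := by
        have := hf.card_filter_apply_eq_le_one p
        have := hg.card_filter_apply_eq_le_one q
        omega

end Retraction

lemma exists_retraction_points {C : Finset ℕ} {n : ℕ} (hC : C.card ≤ n + 2) :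
    ∃ p q : ℕ, (insert p C).card ≤ n + 2 ∧ (insert q C).card ≤ n + 2 ∧ (C \ {p, q}).card ≤ n := by
  rcases Nat.lt_or_ge C.card 2 with hsmall | hlarge
  · obtain ⟨p, hp⟩ : ∃ p, C ⊆ {p} := by
      rcases C.eq_empty_or_nonempty with rfl | ⟨p, hp⟩
      · exact ⟨0, Finset.empty_subset _⟩
      · exact ⟨p, fun x hx => Finset.mem_singleton.2 (Finset.card_le_one.1 (by omega) x hx p hp)⟩
    have hins : (insert p C).card ≤ n + 2 :=
      (Finset.card_le_card (Finset.insert_subset (Finset.mem_singleton_self p) hp)).trans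
        (by simp)
    refine ⟨p, p, hins, hins, ?_⟩
    rw [Finset.insert_eq_of_mem (Finset.mem_singleton_self p),
      Finset.sdiff_eq_empty_iff_subset.2 hp, Finset.card_empty]
    exact Nat.zero_le n
  · obtain ⟨p, hp, q, hq, hpq⟩ := Finset.one_lt_card.1 hlarge
    refine ⟨p, q, by rwa [Finset.insert_eq_of_mem hp], by rwa [Finset.insert_eq_of_mem hq], ?_⟩
    rw [Finset.card_sdiff_of_subset (Finset.insert_subset hp (Finset.singleton_subset_iff.2 hq)),
      Finset.card_pair hpq]
    omega

end

/-- `Zvol` is additive under almost disjoint union. -/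
theorem zvol_add_of_almost_disjoint {n : ℕ} (A B : Finset ℕ)
    (h : (A ∩ B).card ≤ n + 2)
    (X Y : ZChain (n + 1)) (hXc : bdry X = 0) (hYc : bdry Y = 0)
    (hX : suppOn A X) (hY : suppOn B Y) :
    zvol (X + Y) = zvol X + zvol Y := by
  obtain ⟨p, q, hp, hq, hpq⟩ := exists_retraction_points h
  set f := retract A p
  set g := retract B q
  have hXY : bdry (X + Y) = 0 := by rw [bdry_add, hXc, hYc, add_zero]
  obtain ⟨M, hM, hMnorm⟩ := exists_znorm_eq_zvol hXY
  have hfM : bdry (push f M) = X := by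
    rw [bdry_push, hM, map_add, push_eq_self_of_suppOn f hX fun _ => retract_of_mem p,
      push_retract_eq_zero hp hY hYc, add_zero]
  have hgM : bdry (push g M) = Y := by
    rw [bdry_push, hM, map_add, push_eq_self_of_suppOn g hY fun _ => retract_of_mem q,
      push_retract_eq_zero (Finset.inter_comm A B ▸ hq) hX hXc, zero_add]
  have hcollapse : ∀ s ∈ M.support,
      ¬(Set.InjOn f (s : Finset ℕ) ∧ Set.InjOn g (s : Finset ℕ)) := fun s _ hinj => by
    have := card_le_of_injOn_retract hinj.1 hinj.2
    have := s.2
    omega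
  refine le_antisymm (zvol_add_le hXc hYc) ?_
  calc zvol X + zvol Y ≤ znorm (push f M) + znorm (push g M) :=
        add_le_add (zvol_le_znorm hfM) (zvol_le_znorm hgM)
    _ ≤ znorm M := znorm_push_add_znorm_push_le f g M hcollapse
    _ = zvol (X + Y) := hMnorm
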